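/- Hellinger density approximation by grid-uniform copulas: for every copula C on [0,1]^d absolutely continuous with respect to Lebesgue measure with density c ∈ L¹, and every ε > 0, there exists k such that the ρ^k-grid-uniform copula D with cell masses equal to those of C satisfies Hellinger distance H(C, D) < ε. -/

import Mathlib

open MeasureTheory

/-- The half-open grid cell of the uniform grid of degree `k` indexed by `ν`. -/
def gridCell (d : ℕ) (k : Fin d → ℕ) (ν : ∀ j, Fin (k j)) : Set (Fin d → ℝ) :=
  {x | ∀ j, (ν j : ℝ) / (k j : ℝ) < x j ∧ x j ≤ ((ν j : ℕ) + 1 : ℕ) / (k j : ℝ)}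

/-!
The density of the grid-uniform copula is the cell average `gridAverage d k` of the density of
`C`. Cell averaging is a linear L¹-contraction on `[0,1]^d` which moves a uniformly continuous
function by at most its oscillation over distance `1/k`; by density of compactly supported
continuous functions, `gridAverage d k f → f` in L¹ for every integrable `f`. The Hellinger
integrand is dominated by the L¹ one, since `(√a - √b)² ≤ |a - b|`.

The density `c` need not be measurable. It is replaced by a measurable minorant `f` with the same
lower integral: then `c - f` has lower integral zero, so `f` has the same cell masses as `c`, and
the lower integral of `|c - D|` is at most `∫ |f - D|` for every integrable `D`.
-/

open Set Filter Topology Function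
open scoped ENNReal

theorem Real.sq_sqrt_sub_sqrt_le_abs_sub {a b : ℝ} (ha : 0 ≤ a) (hb : 0 ≤ b) :
    (√a - √b) ^ 2 ≤ |a - b| := by
  wlog hba : b ≤ a generalizing a b
  · rw [abs_sub_comm, ← neg_sub, neg_sq]
    exact this hb ha (le_of_not_ge hba)
  rw [abs_of_nonneg (sub_nonneg.2 hba)]
  nlinarith [Real.sq_sqrt ha, Real.sq_sqrt hb,
    mul_le_mul_of_nonneg_left (Real.sqrt_le_sqrt hba) (Real.sqrt_nonneg b)]

section NonmeasurableDensity

variable {α : Type*} [MeasurableSpace α] {μ : Measure α}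

theorem MeasureTheory.lintegral_tsub_eq_zero_of_le_of_lintegral_eq {f g : α → ℝ≥0∞}
    (hgf : g ≤ f) (heq : ∫⁻ x, f x ∂μ = ∫⁻ x, g x ∂μ) (hfin : ∫⁻ x, g x ∂μ ≠ ∞) :
    ∫⁻ x, f x - g x ∂μ = 0 := by
  -- `∫⁻` is superadditive even on non-measurable functions
  have hsuper := le_lintegral_add (μ := μ) g (fun x => f x - g x)
  simp only [add_tsub_cancel_of_le (hgf _), heq] at hsuper
  exact le_antisymm ((ENNReal.add_le_add_iff_left hfin).1 (by simpa using hsuper)) bot_le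

theorem MeasureTheory.exists_measurable_le_lintegral_ofReal_sub_eq_zero {c : α → ℝ}
    (hc : 0 ≤ c) (hfin : ∫⁻ x, ENNReal.ofReal (c x) ∂μ ≠ ∞) :
    ∃ f : α → ℝ, Measurable f ∧ Integrable f μ ∧ 0 ≤ f ∧ f ≤ c ∧
      ∫⁻ x, ENNReal.ofReal (c x - f x) ∂μ = 0 := by
  obtain ⟨g, hgm, hgc, heq⟩ :=
    exists_measurable_le_lintegral_eq μ fun x => ENNReal.ofReal (c x)
  have hg_ne_top x : g x ≠ ∞ := ne_top_of_le_ne_top ENNReal.ofReal_ne_top (hgc x)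
  have hfc x : (g x).toReal ≤ c x := ENNReal.toReal_le_of_le_ofReal (hc x) (hgc x)
  refine ⟨fun x => (g x).toReal, hgm.ennreal_toReal, ⟨hgm.ennreal_toReal.aestronglyMeasurable,
    (hasFiniteIntegral_iff_ofReal (.of_forall fun x => ENNReal.toReal_nonneg)).2
      ((lintegral_mono fun x => ENNReal.ofReal_le_ofReal (hfc x)).trans_lt hfin.lt_top)⟩,
    fun x => ENNReal.toReal_nonneg, hfc, ?_⟩
  rw [← lintegral_tsub_eq_zero_of_le_of_lintegral_eq hgc heq (heq ▸ hfin)]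
  refine lintegral_congr fun x => ?_
  rw [ENNReal.ofReal_sub _ ENNReal.toReal_nonneg, ENNReal.ofReal_toReal (hg_ne_top x)]

theorem MeasureTheory.withDensity_ofReal_eq_of_lintegral_ofReal_sub_eq_zero {c f : α → ℝ}
    (hf : Measurable f) (hf0 : 0 ≤ f) (hfc : f ≤ c)
    (hnull : ∫⁻ x, ENNReal.ofReal (c x - f x) ∂μ = 0) :
    μ.withDensity (fun x => ENNReal.ofReal (c x)) =
      μ.withDensity (fun x => ENNReal.ofReal (f x)) := by
  ext s hs
  have hsplit x : ENNReal.ofReal (c x) = ENNReal.ofReal (f x) + ENNReal.ofReal (c x - f x) := by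
    rw [← ENNReal.ofReal_add (hf0 x) (sub_nonneg.2 (hfc x)), add_sub_cancel]
  have hnull_s : ∫⁻ x in s, ENNReal.ofReal (c x - f x) ∂μ = 0 :=
    le_antisymm (hnull ▸ setLIntegral_le_lintegral s _) bot_le
  rw [withDensity_apply _ hs, withDensity_apply _ hs, lintegral_congr hsplit,
    lintegral_add_left hf.ennreal_ofReal, hnull_s, add_zero]

theorem MeasureTheory.integral_sq_sqrt_sub_sqrt_le_integral_abs_sub {c f D : α → ℝ}
    (hf0 : 0 ≤ f) (hfc : f ≤ c) (hnull : ∫⁻ x, ENNReal.ofReal (c x - f x) ∂μ = 0)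
    (hD : 0 ≤ D) (hfD : Integrable (fun x => f x - D x) μ) :
    ∫ x, (√(c x) - √(D x)) ^ 2 ∂μ ≤ ∫ x, |f x - D x| ∂μ := by
  have hpt x : ENNReal.ofReal ((√(c x) - √(D x)) ^ 2)
      ≤ ENNReal.ofReal (c x - f x) + ENNReal.ofReal |f x - D x| := by
    refine (ENNReal.ofReal_le_ofReal ?_).trans ENNReal.ofReal_add_le
    calc (√(c x) - √(D x)) ^ 2 ≤ |c x - D x| :=
          Real.sq_sqrt_sub_sqrt_le_abs_sub ((hf0 x).trans (hfc x)) (hD x)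
      _ ≤ |c x - f x| + |f x - D x| := abs_sub_le _ _ _
      _ = c x - f x + |f x - D x| := by rw [abs_of_nonneg (sub_nonneg.2 (hfc x))]
  rw [← ENNReal.ofReal_le_ofReal_iff (integral_nonneg fun x => abs_nonneg _)]
  calc ENNReal.ofReal (∫ x, (√(c x) - √(D x)) ^ 2 ∂μ)
      ≤ ∫⁻ x, ENNReal.ofReal ((√(c x) - √(D x)) ^ 2) ∂μ := by
        -- also when the integrand is not integrable, since its integral is then `0`
        simpa only [← Real.enorm_of_nonneg (integral_nonneg fun x => sq_nonneg _),
          ← Real.enorm_of_nonneg (sq_nonneg _)] using enorm_integral_le_lintegral_enorm _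
    _ ≤ ∫⁻ x, ENNReal.ofReal (c x - f x) + ENNReal.ofReal |f x - D x| ∂μ :=
        lintegral_mono hpt
    _ = ENNReal.ofReal (∫ x, |f x - D x| ∂μ) := by
        rw [lintegral_add_right' _ hfD.abs.aemeasurable.ennreal_ofReal, hnull, zero_add,
          ofReal_integral_eq_lintegral_ofReal hfD.abs (ae_of_all _ fun x => abs_nonneg _)]

end NonmeasurableDensity

theorem mem_Ioc_div_iff_ceil_eq {k m : ℕ} (hk : 0 < k) {t : ℝ} :
    t ∈ Ioc ((m : ℝ) / k) ((m + 1) / k) ↔ ⌈t * k⌉₊ = m + 1 := by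
  have hk' : (0 : ℝ) < k := Nat.cast_pos.2 hk
  rw [Nat.ceil_eq_iff m.succ_ne_zero, mem_Ioc, div_lt_iff₀ hk', le_div_iff₀ hk']
  push_cast
  simp

section GridCell

variable {d : ℕ} {k : Fin d → ℕ}

theorem gridCell_eq_pi (ν : ∀ j, Fin (k j)) :
    gridCell d k ν = pi univ fun j => Ioc ((ν j : ℝ) / k j) (((ν j : ℝ) + 1) / k j) := by
  ext x
  simp [gridCell]

theorem measurableSet_gridCell (ν : ∀ j, Fin (k j)) : MeasurableSet (gridCell d k ν) := by
  rw [gridCell_eq_pi]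
  exact .univ_pi fun _ => measurableSet_Ioc

theorem volume_gridCell (ν : ∀ j, Fin (k j)) :
    volume (gridCell d k ν) = ∏ j, (k j : ℝ≥0∞)⁻¹ := by
  rw [gridCell_eq_pi, volume_pi_pi]
  refine Finset.prod_congr rfl fun j _ => ?_
  rw [Real.volume_Ioc, ← sub_div, add_sub_cancel_left, one_div,
    ENNReal.ofReal_inv_of_pos (Nat.cast_pos.2 (ν j).pos), ENNReal.ofReal_natCast]

theorem pairwise_disjoint_gridCell : Pairwise (Disjoint on (gridCell d k)) := by
  intro ν ν' hne
  refine disjoint_left.2 fun x hx hx' => hne (funext fun j => Fin.ext ?_)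
  rw [gridCell_eq_pi] at hx hx'
  have h := (mem_Ioc_div_iff_ceil_eq (ν j).pos).1 (hx j (mem_univ j))
  have h' := (mem_Ioc_div_iff_ceil_eq (ν j).pos).1 (hx' j (mem_univ j))
  omega

theorem gridCell_subset_pi_Ioc (ν : ∀ j, Fin (k j)) :
    gridCell d k ν ⊆ pi univ fun _ => Ioc 0 1 := by
  rw [gridCell_eq_pi]
  refine pi_mono fun j _ => Ioc_subset_Ioc (by positivity) ?_
  rw [div_le_one (Nat.cast_pos.2 (ν j).pos)]
  exact_mod_cast (ν j).is_lt

theorem gridCell_subset_Icc (ν : ∀ j, Fin (k j)) : gridCell d k ν ⊆ Icc 0 1 := by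
  rw [← pi_univ_Icc]
  exact (gridCell_subset_pi_Ioc ν).trans (pi_mono fun _ _ => Ioc_subset_Icc_self)

theorem iUnion_gridCell (hk : ∀ j, 0 < k j) :
    ⋃ ν, gridCell d k ν = pi univ fun _ => Ioc 0 1 := by
  refine (iUnion_subset gridCell_subset_pi_Ioc).antisymm fun x hx => mem_iUnion.2 ?_
  have hceil j : 1 ≤ ⌈x j * k j⌉₊ ∧ ⌈x j * k j⌉₊ ≤ k j := by
    have hxj := hx j (mem_univ j)
    have hk' : (0 : ℝ) < k j := Nat.cast_pos.2 (hk j)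
    refine ⟨Nat.one_le_ceil_iff.2 (mul_pos hxj.1 hk'), Nat.ceil_le.2 ?_⟩
    nlinarith [hxj.2]
  refine ⟨fun j => ⟨⌈x j * k j⌉₊ - 1, by have := hceil j; omega⟩, ?_⟩
  rw [gridCell_eq_pi]
  intro j _
  rw [mem_Ioc_div_iff_ceil_eq (hk j)]
  exact (Nat.sub_add_cancel (hceil j).1).symm

theorem setIntegral_Icc_eq_sum_gridCell {E : Type*} [NormedAddCommGroup E] [NormedSpace ℝ E]
    (hk : ∀ j, 0 < k j) {F : (Fin d → ℝ) → E} (hF : IntegrableOn F (Icc 0 1)) :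
    ∫ x in Icc 0 1, F x = ∑ ν, ∫ x in gridCell d k ν, F x := by
  have hae : (pi univ fun _ => Ioc 0 1 : Set (Fin d → ℝ)) =ᵐ[volume] Icc 0 1 :=
    Measure.univ_pi_Ioc_ae_eq_Icc
  rw [← setIntegral_congr_set hae, ← iUnion_gridCell hk,
    integral_iUnion_fintype measurableSet_gridCell pairwise_disjoint_gridCell
      fun ν => hF.mono_set (gridCell_subset_Icc ν)]

end GridCell

section GridAverage

variable {d k : ℕ}

noncomputable def gridAverage (d k : ℕ) (f : (Fin d → ℝ) → ℝ) (x : Fin d → ℝ) : ℝ :=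
  ∑ ν : Fin d → Fin k, (gridCell d (fun _ => k) ν).indicator
    (fun _ => (∫ y in gridCell d (fun _ => k) ν, f y) * (k : ℝ) ^ d) x

theorem dist_le_of_mem_gridCell {ν : Fin d → Fin k} {x y : Fin d → ℝ}
    (hx : x ∈ gridCell d (fun _ => k) ν) (hy : y ∈ gridCell d (fun _ => k) ν) :
    dist x y ≤ 1 / k := by
  refine (dist_pi_le_iff (by positivity)).2 fun j => ?_
  rw [gridCell_eq_pi] at hx hy
  obtain ⟨hx₁, hx₂⟩ := hx j (mem_univ j)
  obtain ⟨hy₁, hy₂⟩ := hy j (mem_univ j)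
  rw [Real.dist_eq, abs_sub_le_iff, add_div] at *
  constructor <;> linarith

theorem volume_real_gridCell_mul_pow (ν : Fin d → Fin k) :
    volume.real (gridCell d (fun _ => k) ν) * (k : ℝ) ^ d = 1 := by
  rw [measureReal_def, volume_gridCell, Finset.prod_const, Finset.card_univ, Fintype.card_fin,
    ENNReal.toReal_pow, ENNReal.toReal_inv, ENNReal.toReal_natCast, ← mul_pow]
  rcases Nat.eq_zero_or_pos d with rfl | hd
  · simp
  · rw [inv_mul_cancel₀ (Nat.cast_ne_zero.2 (ν ⟨0, hd⟩).pos.ne'), one_pow]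

theorem volume_gridCell_lt_top (ν : Fin d → Fin k) : volume (gridCell d (fun _ => k) ν) < ∞ :=
  (measure_mono (gridCell_subset_Icc ν)).trans_lt isCompact_Icc.measure_lt_top

theorem gridAverage_eq_of_mem (f : (Fin d → ℝ) → ℝ) {ν : Fin d → Fin k} {x : Fin d → ℝ}
    (hx : x ∈ gridCell d (fun _ => k) ν) :
    gridAverage d k f x = (∫ y in gridCell d (fun _ => k) ν, f y) * (k : ℝ) ^ d := by
  rw [gridAverage, Finset.sum_eq_single ν, indicator_of_mem hx]
  · exact fun ν' _ hne => indicator_of_notMem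
      (disjoint_left.1 (pairwise_disjoint_gridCell hne.symm) hx) _
  · exact fun h => absurd (Finset.mem_univ ν) h

theorem integrable_gridAverage (f : (Fin d → ℝ) → ℝ) : Integrable (gridAverage d k f) := by
  refine integrable_finsetSum _ fun ν _ => ?_
  exact (integrable_indicator_iff (measurableSet_gridCell ν)).2
    (integrableOn_const (volume_gridCell_lt_top ν).ne)

theorem gridAverage_nonneg {f : (Fin d → ℝ) → ℝ} (hf : 0 ≤ f) : 0 ≤ gridAverage d k f :=
  fun x => Finset.sum_nonneg fun ν _ => indicator_nonneg (fun _ _ =>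
    mul_nonneg (setIntegral_nonneg (measurableSet_gridCell ν) fun y _ => hf y) (by positivity)) x

theorem gridAverage_sub {f g : (Fin d → ℝ) → ℝ} (hf : IntegrableOn f (Icc 0 1))
    (hg : IntegrableOn g (Icc 0 1)) :
    gridAverage d k (fun x => f x - g x) = fun x => gridAverage d k f x - gridAverage d k g x := by
  funext x
  simp only [gridAverage, ← Finset.sum_sub_distrib]
  refine Finset.sum_congr rfl fun ν _ => ?_
  rw [integral_sub (hf.mono_set (gridCell_subset_Icc ν)) (hg.mono_set (gridCell_subset_Icc ν))]
  by_cases hx : x ∈ gridCell d (fun _ => k) ν <;> simp [hx, sub_mul]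

theorem integral_abs_gridAverage_le (hk : 0 < k) {f : (Fin d → ℝ) → ℝ}
    (hf : IntegrableOn f (Icc 0 1)) :
    ∫ x in Icc 0 1, |gridAverage d k f x| ≤ ∫ x in Icc 0 1, |f x| := by
  rw [setIntegral_Icc_eq_sum_gridCell (fun _ => hk) (integrable_gridAverage f).abs.integrableOn,
    setIntegral_Icc_eq_sum_gridCell (fun _ => hk) hf.abs]
  refine Finset.sum_le_sum fun ν _ => ?_
  calc ∫ x in gridCell d (fun _ => k) ν, |gridAverage d k f x|
      = |∫ y in gridCell d (fun _ => k) ν, f y| := by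
        rw [setIntegral_congr_fun (measurableSet_gridCell ν)
          fun x hx => by rw [gridAverage_eq_of_mem f hx], setIntegral_const, smul_eq_mul,
          abs_mul, abs_pow, Nat.abs_cast, mul_left_comm, volume_real_gridCell_mul_pow,
          mul_one]
    _ ≤ ∫ y in gridCell d (fun _ => k) ν, |f y| := abs_integral_le_integral_abs

theorem abs_sub_gridAverage_le_of_mem {f : (Fin d → ℝ) → ℝ} {ν : Fin d → Fin k}
    {x : Fin d → ℝ} (hx : x ∈ gridCell d (fun _ => k) ν)
    (hf : IntegrableOn f (gridCell d (fun _ => k) ν)) {δ : ℝ}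
    (hosc : ∀ y ∈ gridCell d (fun _ => k) ν, |f x - f y| ≤ δ) :
    |f x - gridAverage d k f x| ≤ δ := by
  have hvol := volume_gridCell_lt_top ν
  have hfx : IntegrableOn (fun _ => f x) (gridCell d (fun _ => k) ν) := integrableOn_const hvol.ne
  have hconst : f x = (∫ _ in gridCell d (fun _ => k) ν, f x) * (k : ℝ) ^ d := by
    rw [setIntegral_const, smul_eq_mul, mul_right_comm, volume_real_gridCell_mul_pow, one_mul]
  rw [gridAverage_eq_of_mem f hx, hconst, ← sub_mul, ← integral_sub hfx hf,
    abs_mul, abs_pow, Nat.abs_cast]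
  calc |∫ y in gridCell d (fun _ => k) ν, f x - f y| * (k : ℝ) ^ d
      ≤ δ * volume.real (gridCell d (fun _ => k) ν) * (k : ℝ) ^ d := by
        gcongr
        exact norm_setIntegral_le_of_norm_le_const (f := fun y => f x - f y) hvol hosc
    _ = δ := by rw [mul_assoc, volume_real_gridCell_mul_pow, mul_one]

end GridAverage

section Convergence

variable {d : ℕ}

theorem integral_abs_sub_gridAverage_le {k : ℕ} (hk : 0 < k) {f : (Fin d → ℝ) → ℝ}
    (hf : IntegrableOn f (Icc 0 1)) {δ : ℝ}
    (hosc : ∀ x y, dist x y ≤ 1 / k → |f x - f y| ≤ δ) :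
    ∫ x in Icc 0 1, |f x - gridAverage d k f x| ≤ δ := by
  have hint : IntegrableOn (fun x => |f x - gridAverage d k f x|) (Icc 0 1) :=
    (hf.sub (integrable_gridAverage f).integrableOn).abs
  have hδ : IntegrableOn (fun _ => δ) (Icc (0 : Fin d → ℝ) 1) :=
    integrableOn_const isCompact_Icc.measure_lt_top.ne
  calc ∫ x in Icc 0 1, |f x - gridAverage d k f x|
      = ∑ ν, ∫ x in gridCell d (fun _ => k) ν, |f x - gridAverage d k f x| :=
        setIntegral_Icc_eq_sum_gridCell (fun _ => hk) hint
    _ ≤ ∑ ν, ∫ _ in gridCell d (fun _ => k) ν, δ :=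
        Finset.sum_le_sum fun ν _ => setIntegral_mono_on (hint.mono_set (gridCell_subset_Icc ν))
          (hδ.mono_set (gridCell_subset_Icc ν)) (measurableSet_gridCell ν) fun x hx =>
            abs_sub_gridAverage_le_of_mem hx (hf.mono_set (gridCell_subset_Icc ν))
              fun y hy => hosc x y (dist_le_of_mem_gridCell hx hy)
    _ = ∫ _ in Icc 0 1, δ := (setIntegral_Icc_eq_sum_gridCell (fun _ => hk) hδ).symm
    _ = δ := by simp [measureReal_def, Real.volume_Icc_pi]

theorem tendsto_integral_abs_sub_gridAverage_of_uniformContinuous {h : (Fin d → ℝ) → ℝ}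
    (hh : UniformContinuous h) :
    Tendsto (fun k => ∫ x in Icc 0 1, |h x - gridAverage d k h x|) atTop (𝓝 0) := by
  refine tendsto_order.2 ⟨fun a ha => .of_forall fun k =>
    ha.trans_le (integral_nonneg fun x => abs_nonneg _), fun δ hδ => ?_⟩
  obtain ⟨η, hη, hmod⟩ := Metric.uniformContinuous_iff.1 hh (δ / 2) (half_pos hδ)
  obtain ⟨n, hn⟩ := exists_nat_one_div_lt hη
  filter_upwards [eventually_ge_atTop (n + 1)] with k hk
  have hk' : ((n : ℝ) + 1) ≤ k := by exact_mod_cast hk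
  refine (integral_abs_sub_gridAverage_le (by omega) hh.continuous.integrableOn_Icc
    fun x y hxy => (hmod ?_).le).trans_lt (half_lt_self hδ)
  calc dist x y ≤ 1 / k := hxy
    _ ≤ 1 / ((n : ℝ) + 1) := one_div_le_one_div_of_le (by positivity) hk'
    _ < η := hn

theorem tendsto_integral_abs_sub_gridAverage {f : (Fin d → ℝ) → ℝ}
    (hf : IntegrableOn f (Icc 0 1)) :
    Tendsto (fun k => ∫ x in Icc 0 1, |f x - gridAverage d k f x|) atTop (𝓝 0) := by
  refine tendsto_order.2 ⟨fun a ha => .of_forall fun k =>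
    ha.trans_le (integral_nonneg fun x => abs_nonneg _), fun δ hδ => ?_⟩
  have : (volume.restrict (Icc (0 : Fin d → ℝ) 1)).Regular :=
    .restrict_of_measure_ne_top isCompact_Icc.measure_lt_top.ne
  obtain ⟨h, hh_supp, hfh, hh_cont, -⟩ :=
    hf.exists_hasCompactSupport_integral_sub_le (show 0 < δ / 4 by positivity)
  have hh : IntegrableOn h (Icc 0 1) := hh_cont.integrableOn_Icc
  filter_upwards [(tendsto_order.1 (tendsto_integral_abs_sub_gridAverage_of_uniformContinuous
    (hh_supp.uniformContinuous_of_continuous hh_cont))).2 (δ / 4) (by positivity),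
    eventually_gt_atTop 0] with k hhk hk
  set A := gridAverage d k
  have hAsub : A (fun y => h y - f y) = fun x => A h x - A f x := gridAverage_sub hh hf
  have i₁ : IntegrableOn (fun x => |f x - h x|) (Icc 0 1) := (hf.sub hh).abs
  have i₂ : IntegrableOn (fun x => |h x - A h x|) (Icc 0 1) :=
    (hh.sub (integrable_gridAverage h).integrableOn).abs
  have i₃ : IntegrableOn (fun x => |A (fun y => h y - f y) x|) (Icc 0 1) :=
    (integrable_gridAverage _).integrableOn.abs
  have hfh' : ∫ x in Icc 0 1, |f x - h x| ≤ δ / 4 := by simpa only [Real.norm_eq_abs] using hfh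
  have hcontr : ∫ x in Icc 0 1, |A (fun y => h y - f y) x| ≤ δ / 4 := by
    refine (integral_abs_gridAverage_le hk (f := fun y => h y - f y) (hh.sub hf)).trans ?_
    simpa only [abs_sub_comm] using hfh'
  have htri x : |f x - A f x| ≤ |f x - h x| + |h x - A h x| + |A (fun y => h y - f y) x| := by
    rw [hAsub]
    calc |f x - A f x| = |(f x - h x) + (h x - A h x) + (A h x - A f x)| := by ring_nf
      _ ≤ _ := abs_add_three _ _ _
  calc ∫ x in Icc 0 1, |f x - A f x|
      ≤ ∫ x in Icc 0 1, |f x - h x| + |h x - A h x| + |A (fun y => h y - f y) x| :=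
        setIntegral_mono (hf.sub (integrable_gridAverage f).integrableOn).abs
          ((i₁.add i₂).add i₃) htri
    _ = (∫ x in Icc 0 1, |f x - h x|) + (∫ x in Icc 0 1, |h x - A h x|)
          + ∫ x in Icc 0 1, |A (fun y => h y - f y) x| := by
        rw [integral_add (f := fun x => |f x - h x| + |h x - A h x|) (i₁.add i₂) i₃,
          integral_add i₁ i₂]
    _ < δ := by linarith

end Convergence

theorem grid_uniform_hellinger_approximation_general (d : ℕ)
    (C : Measure (Fin d → ℝ)) [IsProbabilityMeasure C]
    (c : (Fin d → ℝ) → ℝ) (hc : ∀ x, 0 ≤ c x)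
    (hC : C = (volume.restrict (Set.Icc (0 : Fin d → ℝ) 1)).withDensity
      (fun x => ENNReal.ofReal (c x))) :
    ∀ ε > (0 : ℝ), ∃ kk : ℕ, 0 < kk ∧
      (1 / 2) * ∫ x in Set.Icc (0 : Fin d → ℝ) 1,
          (Real.sqrt (c x) -
            Real.sqrt (∑ ν : (∀ _ : Fin d, Fin kk),
              Set.indicator (gridCell d (fun _ => kk) ν)
                (fun _ => (C (gridCell d (fun _ => kk) ν)).toReal * (kk : ℝ) ^ d) x)) ^ 2
        < ε ^ 2 := by
  intro ε hε
  have hfin : ∫⁻ x in Icc 0 1, ENNReal.ofReal (c x) ≠ ∞ := by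
    rw [← setLIntegral_univ, ← withDensity_apply _ .univ, ← hC]
    exact measure_ne_top C univ
  obtain ⟨f, hfm, hf, hf0, hfc, hnull⟩ :=
    exists_measurable_le_lintegral_ofReal_sub_eq_zero hc hfin
  have hmass {k : ℕ} (ν : Fin d → Fin k) :
      (C (gridCell d (fun _ => k) ν)).toReal = ∫ y in gridCell d (fun _ => k) ν, f y := by
    rw [hC, withDensity_ofReal_eq_of_lintegral_ofReal_sub_eq_zero hfm hf0 hfc hnull,
      withDensity_apply _ (measurableSet_gridCell ν),
      Measure.restrict_restrict (measurableSet_gridCell ν), inter_eq_left.2 (gridCell_subset_Icc ν),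
      ← ofReal_integral_eq_lintegral_ofReal (IntegrableOn.mono_set hf (gridCell_subset_Icc ν))
        (.of_forall hf0),
      ENNReal.toReal_ofReal (setIntegral_nonneg (measurableSet_gridCell ν) fun y _ => hf0 y)]
  obtain ⟨k, hk_lt, hk⟩ := ((tendsto_order.1 (tendsto_integral_abs_sub_gridAverage hf)).2
    (2 * ε ^ 2) (by positivity) |>.and (eventually_gt_atTop 0)).exists
  refine ⟨k, hk, ?_⟩
  simp only [hmass]
  calc (1 / 2) * ∫ x in Icc 0 1, (√(c x) - √(gridAverage d k f x)) ^ 2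
      ≤ (1 / 2) * ∫ x in Icc 0 1, |f x - gridAverage d k f x| := by
        refine mul_le_mul_of_nonneg_left ?_ (by norm_num)
        exact integral_sq_sqrt_sub_sqrt_le_integral_abs_sub hf0 hfc hnull (gridAverage_nonneg hf0)
          (hf.sub (integrable_gridAverage f).integrableOn)
    _ < ε ^ 2 := by linarith

/-- every absolutely continuous copula can be approximated
arbitrarily well in Hellinger distance by the grid-uniform copula with the same
cell masses. -/
theorem grid_uniform_hellinger_approximation (d : ℕ) (hd : 0 < d)
    (C : Measure (Fin d → ℝ)) [IsProbabilityMeasure C]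
    (c : (Fin d → ℝ) → ℝ) (hc : ∀ x, 0 ≤ c x)
    (hC : C = (volume.restrict (Set.Icc (0 : Fin d → ℝ) 1)).withDensity
      (fun x => ENNReal.ofReal (c x)))
    (hmarg : ∀ j, C.map (fun x => x j) = volume.restrict (Set.Icc (0 : ℝ) 1)) :
    ∀ ε > (0 : ℝ), ∃ kk : ℕ, 0 < kk ∧
      (1 / 2) * ∫ x in Set.Icc (0 : Fin d → ℝ) 1,
          (Real.sqrt (c x) -
            Real.sqrt (∑ ν : (∀ _ : Fin d, Fin kk),
              Set.indicator (gridCell d (fun _ => kk) ν)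
                (fun _ => (C (gridCell d (fun _ => kk) ν)).toReal * (kk : ℝ) ^ d) x)) ^ 2
        < ε ^ 2 :=
  grid_uniform_hellinger_approximation_general d C c hc hC
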